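/- For nonnegative integers m and n, s_{((2m+1)^n, 0^n)}(x_1,…,x_n,x_1^{-1},…,x_n^{-1}) = sp_{(m^n)}(x_1,…,x_n) · oe_{((m+1)^n)}(x_1,…,x_n). -/
import Mathlib

noncomputable section

/-- The field ℚ(x_1,…,x_n) of rational functions. -/
abbrev K (n : ℕ) : Type := FractionRing (MvPolynomial (Fin n) ℚ)

/-- The variable x_i. -/
def X {n : ℕ} (i : Fin n) : K n :=
  algebraMap (MvPolynomial (Fin n) ℚ) (K n) (MvPolynomial.X i)

/-- ∏_{i<j} (z_i + z_i⁻¹ - z_j - z_j⁻¹). -/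
def xpairs {F : Type*} [Field F] {m : ℕ} (z : Fin m → F) : F :=
  ∏ i : Fin m, ∏ j : Fin m, if i < j then z i + (z i)⁻¹ - z j - (z j)⁻¹ else 1

/-- Bialternant Schur polynomial s_μ(z) = det(z_i^{μ_j+m-j}) / ∏_{i<j}(z_i - z_j). -/
def schur {F : Type*} [Field F] (m : ℕ) (μ : Fin m → ℤ) (z : Fin m → F) : F :=
  (Matrix.of fun i j : Fin m => z i ^ (μ j + m - 1 - (j : ℕ))).det /
    ∏ i : Fin m, ∏ j : Fin m, if i < j then z i - z j else 1

/-- Symplectic character sp_λ(z). -/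
def spC {F : Type*} [Field F] (n : ℕ) (lam : Fin n → ℤ) (z : Fin n → F) : F :=
  (Matrix.of fun i j : Fin n =>
      z i ^ (lam j + n - (j : ℕ)) - z i ^ (-(lam j + n - (j : ℕ)))).det /
    ((∏ i : Fin n, (z i - (z i)⁻¹)) * xpairs z)

/-- Even orthogonal character oe_λ(z), including the factor 1+δ_{λ_n,0}. -/
def oeC {F : Type*} [Field F] (n : ℕ) (lam : Fin n → ℤ) (z : Fin n → F) : F :=
  (Matrix.of fun i j : Fin n =>
      z i ^ (lam j + n - 1 - (j : ℕ)) + z i ^ (-(lam j + n - 1 - (j : ℕ)))).det /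
    ((if h : 0 < n then (if lam ⟨n - 1, by omega⟩ = 0 then 2 else 1) else 1) * xpairs z)

open Matrix Finset

section Aux

variable {F : Type*} [Field F]

/-- Reversal permutation matrix. -/
def revMat (F : Type*) [Field F] (n : ℕ) : Matrix (Fin n) (Fin n) F :=
  Matrix.of fun i j => if i = j.rev then 1 else 0

lemma det_revMat (n : ℕ) : (revMat F n).det = (-1 : F) ^ (n.choose 2) := by
  induction n with
  | zero => simp [revMat]
  | succ n ih =>
    rw [Matrix.det_succ_row_zero]
    rw [Finset.sum_eq_single (Fin.last n)]
    · have h0 : (revMat F (n+1)) 0 (Fin.last n) = 1 := by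
        simp [revMat, Fin.rev_last]
      have hsub : (revMat F (n+1)).submatrix Fin.succ (Fin.last n).succAbove
          = revMat F n := by
        ext i j
        simp only [Matrix.submatrix_apply, Fin.succAbove_last, revMat, Matrix.of_apply,
          Fin.rev_castSucc]
        simp [Fin.succ_inj]
      rw [h0, hsub, ih]
      have : (n+1).choose 2 = n.choose 2 + n := by
        rw [Nat.choose_succ_succ]; simp [Nat.choose_one_right, Nat.add_comm]
      rw [this, pow_add, Fin.val_last]
      ring
    · intro j _ hj
      have : (revMat F (n+1)) 0 j = 0 := by
        simp only [revMat, Matrix.of_apply, ite_eq_right_iff]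
        intro h
        exfalso
        apply hj
        have := congrArg Fin.rev h
        simpa [Fin.rev_last] using this.symm
      simp [this]
    · simp

lemma prod_ite_neg_one (n : ℕ) :
    (∏ i : Fin n, ∏ j : Fin n, if i < j then (-1 : F) else 1) = (-1 : F) ^ (n.choose 2) := by
  have h1 : ∀ i : Fin n, (∏ j : Fin n, if i < j then (-1 : F) else 1) = (-1 : F) ^ (n - 1 - i) := by
    intro i
    rw [← Finset.prod_filter]
    simp [Finset.filter_lt_eq_Ioi, Fin.card_Ioi]
  simp_rw [h1]
  rw [Finset.prod_pow_eq_pow_sum]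
  congr 1
  rw [Fin.sum_univ_eq_sum_range (fun i => n - 1 - i)]
  rw [← Finset.sum_range_reflect]
  rw [Nat.choose_two_right, ← Finset.sum_range_id n]
  apply Finset.sum_congr rfl
  intro i hi
  simp at hi
  omega

lemma prod_prod_split {n : ℕ} (f : Fin n → Fin n → F) :
    (∏ i : Fin n, ∏ j : Fin n, f i j)
      = (∏ i : Fin n, f i i) *
        ∏ i : Fin n, ∏ j : Fin n, if i < j then f i j * f j i else 1 := by
  have key : ∀ i j : Fin n, f i j =
      ((if i = j then f i j else 1) * (if i < j then f i j else 1)) *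
        (if j < i then f i j else 1) := by
    intro i j
    rcases lt_trichotomy i j with h | h | h
    · simp [h, h.ne, lt_asymm h]
    · simp [h, lt_irrefl]
    · simp [h, (h.ne).symm, lt_asymm h]
  calc (∏ i : Fin n, ∏ j : Fin n, f i j)
      = ∏ i : Fin n, ∏ j : Fin n,
          (((if i = j then f i j else 1) * (if i < j then f i j else 1)) *
            (if j < i then f i j else 1)) := by
        exact Finset.prod_congr rfl fun i _ => Finset.prod_congr rfl fun j _ => key i j
    _ = ((∏ i : Fin n, ∏ j : Fin n, if i = j then f i j else 1) *
          (∏ i : Fin n, ∏ j : Fin n, if i < j then f i j else 1)) *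
          (∏ i : Fin n, ∏ j : Fin n, if j < i then f i j else 1) := by
        simp_rw [Finset.prod_mul_distrib]
    _ = ((∏ i : Fin n, f i i) *
          (∏ i : Fin n, ∏ j : Fin n, if i < j then f i j else 1)) *
          (∏ i : Fin n, ∏ j : Fin n, if i < j then f j i else 1) := by
        congr 1
        · congr 1
          exact Finset.prod_congr rfl fun i _ => by simp
        · exact Finset.prod_comm
    _ = (∏ i : Fin n, f i i) *
          ∏ i : Fin n, ∏ j : Fin n, if i < j then f i j * f j i else 1 := by
        rw [mul_assoc]
        congr 1
        rw [← Finset.prod_mul_distrib]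
        refine Finset.prod_congr rfl fun i _ => ?_
        rw [← Finset.prod_mul_distrib]
        refine Finset.prod_congr rfl fun j _ => ?_
        split <;> simp

lemma denom_key {n : ℕ} (x : Fin n → F) (hx : ∀ i, x i ≠ 0) :
    (∏ i : Fin n, ∏ j : Fin n, if i < j then x i - x j else 1) *
      ((∏ i : Fin n, ∏ j : Fin n, (x i - (x j)⁻¹)) *
        (∏ i : Fin n, ∏ j : Fin n, if i < j then (x i)⁻¹ - (x j)⁻¹ else 1))
    = (-1 : F) ^ (n.choose 2) *
        ((∏ i : Fin n, (x i - (x i)⁻¹)) * (xpairs x * xpairs x)) := by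
  rw [prod_prod_split (fun i j => x i - (x j)⁻¹)]
  have collect :
      (∏ i : Fin n, ∏ j : Fin n, if i < j then x i - x j else 1) *
        ((∏ i : Fin n, ∏ j : Fin n,
            if i < j then (x i - (x j)⁻¹) * (x j - (x i)⁻¹) else 1) *
          (∏ i : Fin n, ∏ j : Fin n, if i < j then (x i)⁻¹ - (x j)⁻¹ else 1))
      = ∏ i : Fin n, ∏ j : Fin n,
          if i < j then
            (x i - x j) * ((x i - (x j)⁻¹) * (x j - (x i)⁻¹)) * ((x i)⁻¹ - (x j)⁻¹)
          else 1 := by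
    rw [← Finset.prod_mul_distrib, ← Finset.prod_mul_distrib]
    refine Finset.prod_congr rfl fun i _ => ?_
    rw [← Finset.prod_mul_distrib, ← Finset.prod_mul_distrib]
    refine Finset.prod_congr rfl fun j _ => ?_
    split
    · ring
    · simp
  have pointwise :
      (∏ i : Fin n, ∏ j : Fin n,
          if i < j then
            (x i - x j) * ((x i - (x j)⁻¹) * (x j - (x i)⁻¹)) * ((x i)⁻¹ - (x j)⁻¹)
          else 1)
      = ∏ i : Fin n, ∏ j : Fin n,
          if i < j then
            (-1 : F) * ((x i + (x i)⁻¹ - x j - (x j)⁻¹) * (x i + (x i)⁻¹ - x j - (x j)⁻¹))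
          else 1 := by
    refine Finset.prod_congr rfl fun i _ => Finset.prod_congr rfl fun j _ => ?_
    split
    · have hi := hx i
      have hj := hx j
      field_simp
      ring
    · rfl
  have expand :
      (∏ i : Fin n, ∏ j : Fin n,
          if i < j then
            (-1 : F) * ((x i + (x i)⁻¹ - x j - (x j)⁻¹) * (x i + (x i)⁻¹ - x j - (x j)⁻¹))
          else 1)
      = (-1 : F) ^ (n.choose 2) * (xpairs x * xpairs x) := by
    rw [← prod_ite_neg_one (F := F) n]
    unfold xpairs
    rw [← Finset.prod_mul_distrib, ← Finset.prod_mul_distrib]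
    refine Finset.prod_congr rfl fun i _ => ?_
    rw [← Finset.prod_mul_distrib, ← Finset.prod_mul_distrib]
    refine Finset.prod_congr rfl fun j _ => ?_
    split <;> simp
  calc _ = (∏ i : Fin n, (x i - (x i)⁻¹)) *
        ((∏ i : Fin n, ∏ j : Fin n, if i < j then x i - x j else 1) *
          ((∏ i : Fin n, ∏ j : Fin n,
              if i < j then (x i - (x j)⁻¹) * (x j - (x i)⁻¹) else 1) *
            (∏ i : Fin n, ∏ j : Fin n, if i < j then (x i)⁻¹ - (x j)⁻¹ else 1))) := by ring
    _ = _ := by rw [collect, pointwise, expand]; ring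

lemma mul_revMat {n : ℕ} (M : Matrix (Fin n) (Fin n) F) :
    M * revMat F n = Matrix.of fun i j => M i j.rev := by
  ext i j
  simp [Matrix.mul_apply, revMat, mul_ite, Finset.sum_ite_eq']

variable (m n : ℕ) (x : Fin n → F)

def matP : Matrix (Fin n) (Fin n) F :=
  Matrix.of fun i j => x i ^ ((m : ℤ) + n - (j : ℕ)) + x i ^ (-((m : ℤ) + n - (j : ℕ)))

def matQ : Matrix (Fin n) (Fin n) F :=
  Matrix.of fun i j => x i ^ ((m : ℤ) + n - (j : ℕ)) - x i ^ (-((m : ℤ) + n - (j : ℕ)))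

def matA : Matrix (Fin n) (Fin n) F := Matrix.of fun i j => x i ^ ((m : ℤ) + n - (j : ℕ))
def matB : Matrix (Fin n) (Fin n) F := Matrix.of fun i j => x i ^ (-((m : ℤ) + 1 + (j : ℕ)))
def matC : Matrix (Fin n) (Fin n) F := Matrix.of fun i j => x i ^ (-((m : ℤ) + n - (j : ℕ)))
def matD : Matrix (Fin n) (Fin n) F := Matrix.of fun i j => x i ^ ((m : ℤ) + 1 + (j : ℕ))

lemma block_step :
    Matrix.fromBlocks (matA m n x) (matB m n x) (matC m n x) (matD m n x) *
      Matrix.fromBlocks 1 1 (revMat F n) (-(revMat F n))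
    = Matrix.fromBlocks (matP m n x) (matQ m n x) (matP m n x) (-(matQ m n x)) := by
  rw [Matrix.fromBlocks_multiply]
  rw [Matrix.mul_one, Matrix.mul_one, Matrix.mul_neg, Matrix.mul_neg,
    mul_revMat, mul_revMat]
  have hrev : ∀ j : Fin n, (-((m : ℤ) + 1 + ((j.rev : Fin n) : ℕ))) = -((m : ℤ) + n - (j : ℕ)) := by
    intro j
    have h1 := j.isLt
    rw [Fin.val_rev]
    omega
  have hrev' : ∀ j : Fin n, ((m : ℤ) + 1 + ((j.rev : Fin n) : ℕ)) = ((m : ℤ) + n - (j : ℕ)) := by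
    intro j
    have h1 := j.isLt
    rw [Fin.val_rev]
    omega
  ext p q
  rcases p with i | i <;> rcases q with j | j <;>
    simp only [matA, matB, matC, matD, matP, matQ, Matrix.add_apply, Matrix.sub_apply,
      Matrix.neg_apply, Matrix.of_apply, Matrix.fromBlocks_apply₁₁, Matrix.fromBlocks_apply₁₂,
      Matrix.fromBlocks_apply₂₁, Matrix.fromBlocks_apply₂₂] <;>
    (first | rw [hrev j] | rw [hrev' j]) <;> ring

lemma det_key (h2 : (2 : F) ≠ 0) (hx : ∀ i, x i ≠ 0) :
    (Matrix.of fun p q : Fin n ⊕ Fin n =>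
        Sum.elim x (fun i => (x i)⁻¹) p ^
          Sum.elim (fun j : Fin n => 2 * (m : ℤ) + 2 * n - (j : ℕ))
            (fun j : Fin n => (n : ℤ) - 1 - (j : ℕ)) q).det
    = (-1 : F) ^ (n.choose 2) * ((matP m n x).det * (matQ m n x).det) := by
  have hM : (Matrix.of fun p q : Fin n ⊕ Fin n =>
        Sum.elim x (fun i => (x i)⁻¹) p ^
          Sum.elim (fun j : Fin n => 2 * (m : ℤ) + 2 * n - (j : ℕ))
            (fun j : Fin n => (n : ℤ) - 1 - (j : ℕ)) q)
      = Matrix.of fun p q =>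
          (Sum.elim (fun i => x i ^ ((m : ℤ) + n)) (fun i => x i ^ (-((m : ℤ) + n))) p) *
          (Matrix.fromBlocks (matA m n x) (matB m n x) (matC m n x) (matD m n x)) p q := by
    ext p q
    rcases p with i | i <;> rcases q with j | j <;>
      simp only [Matrix.of_apply, Sum.elim_inl, Sum.elim_inr, Matrix.fromBlocks_apply₁₁,
        Matrix.fromBlocks_apply₁₂, Matrix.fromBlocks_apply₂₁, Matrix.fromBlocks_apply₂₂,
        matA, matB, matC, matD, _root_.inv_zpow, ← _root_.zpow_neg] <;>
      rw [← zpow_add₀ (hx i)] <;> congr 1 <;> ring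
  rw [hM, Matrix.det_mul_column]
  have hprod : (∏ p : Fin n ⊕ Fin n,
      Sum.elim (fun i => x i ^ ((m : ℤ) + n)) (fun i => x i ^ (-((m : ℤ) + n))) p) = 1 := by
    rw [Fintype.prod_sum_type]
    simp only [Sum.elim_inl, Sum.elim_inr]
    rw [← Finset.prod_mul_distrib]
    refine Finset.prod_eq_one fun i _ => ?_
    have hz : ((m : ℤ) + n) + (-((m : ℤ) + n)) = 0 := by ring
    rw [← zpow_add₀ (hx i), hz, zpow_zero]
  rw [hprod, one_mul]
  have hPQ : (Matrix.fromBlocks (matP m n x) (matQ m n x) (matP m n x) (-(matQ m n x)))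
      = Matrix.fromBlocks 1 0 1 1 *
          Matrix.fromBlocks (matP m n x) (matQ m n x) 0 ((-2 : F) • matQ m n x) := by
    have hQ2 : matQ m n x + (-2 : F) • matQ m n x = -(matQ m n x) := by
      ext i j
      simp only [Matrix.add_apply, Matrix.neg_apply, Matrix.smul_apply, smul_eq_mul]
      ring
    rw [Matrix.fromBlocks_multiply]
    simp only [Matrix.one_mul, Matrix.zero_mul, Matrix.mul_zero, Matrix.mul_one, add_zero,
      zero_add]
    rw [hQ2]
  have hT : (Matrix.fromBlocks (1 : Matrix (Fin n) (Fin n) F) 1 (revMat F n) (-(revMat F n)))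
      = Matrix.fromBlocks 1 0 (revMat F n) 1 *
          Matrix.fromBlocks 1 1 0 ((-2 : F) • revMat F n) := by
    have hR2 : revMat F n + (-2 : F) • revMat F n = -(revMat F n) := by
      ext i j
      simp only [Matrix.add_apply, Matrix.neg_apply, Matrix.smul_apply, smul_eq_mul]
      ring
    rw [Matrix.fromBlocks_multiply]
    simp only [Matrix.one_mul, Matrix.zero_mul, Matrix.mul_zero, Matrix.mul_one, add_zero,
      zero_add]
    rw [hR2]
  have hdet1 : (Matrix.fromBlocks (matA m n x) (matB m n x) (matC m n x) (matD m n x)).det *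
      ((-2 : F) ^ n * (-1 : F) ^ (n.choose 2))
      = (matP m n x).det * ((-2 : F) ^ n * (matQ m n x).det) := by
    have e1 := congrArg Matrix.det (block_step m n x)
    rw [Matrix.det_mul, hT, Matrix.det_mul, hPQ, Matrix.det_mul] at e1
    rw [Matrix.det_fromBlocks_zero₁₂, Matrix.det_fromBlocks_zero₂₁,
      Matrix.det_fromBlocks_zero₁₂, Matrix.det_fromBlocks_zero₂₁,
      Matrix.det_smul, Matrix.det_smul, det_revMat] at e1
    simp only [Matrix.det_one, one_mul, mul_one, Fintype.card_fin] at e1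
    calc (Matrix.fromBlocks (matA m n x) (matB m n x) (matC m n x) (matD m n x)).det *
        ((-2 : F) ^ n * (-1 : F) ^ (n.choose 2)) = _ := by rw [e1]
      _ = (matP m n x).det * ((-2 : F) ^ n * (matQ m n x).det) := by ring
  have hne : ((-2 : F) ^ n) ≠ 0 := pow_ne_zero _ (neg_ne_zero.mpr h2)
  have hsq : ((-1 : F) ^ (n.choose 2)) * ((-1 : F) ^ (n.choose 2)) = 1 := by
    rw [← mul_pow]; norm_num
  have h5 : (Matrix.fromBlocks (matA m n x) (matB m n x) (matC m n x) (matD m n x)).det *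
      (-1 : F) ^ (n.choose 2) = (matP m n x).det * (matQ m n x).det := by
    apply mul_left_cancel₀ hne
    calc (-2:F)^n * ((Matrix.fromBlocks (matA m n x) (matB m n x) (matC m n x) (matD m n x)).det *
          (-1 : F) ^ (n.choose 2))
        = (Matrix.fromBlocks (matA m n x) (matB m n x) (matC m n x) (matD m n x)).det *
          ((-2 : F) ^ n * (-1 : F) ^ (n.choose 2)) := by ring
      _ = (matP m n x).det * ((-2 : F) ^ n * (matQ m n x).det) := hdet1
      _ = (-2:F)^n * ((matP m n x).det * (matQ m n x).det) := by ring
  calc (Matrix.fromBlocks (matA m n x) (matB m n x) (matC m n x) (matD m n x)).det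
      = (Matrix.fromBlocks (matA m n x) (matB m n x) (matC m n x) (matD m n x)).det *
        ((-1 : F) ^ (n.choose 2) * (-1 : F) ^ (n.choose 2)) := by rw [hsq, mul_one]
    _ = ((Matrix.fromBlocks (matA m n x) (matB m n x) (matC m n x) (matD m n x)).det *
        (-1 : F) ^ (n.choose 2)) * (-1 : F) ^ (n.choose 2) := by ring
    _ = _ := by rw [h5]; ring

end Aux

/-- s_{((2m+1)^n,0^n)}(x,x⁻¹) = sp_{(m^n)}(x) · oe_{((m+1)^n)}(x). -/
theorem schur_rect_odd_factorization (m n : ℕ) :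
    schur (2 * n)
        (fun j => if (j : ℕ) < n then (2 * m + 1 : ℤ) else 0)
        (fun i => if h : (i : ℕ) < n then X ⟨i, h⟩
                  else (X ⟨(i : ℕ) - n, by have := i.isLt; omega⟩)⁻¹)
      = spC n (fun _ => (m : ℤ)) X * oeC n (fun _ => (m : ℤ) + 1) X := by
  have hx : ∀ i : Fin n, X i ≠ 0 := by
    intro i
    simp only [X]
    rw [map_ne_zero_iff _ (IsFractionRing.injective (MvPolynomial (Fin n) ℚ) (K n))]
    exact MvPolynomial.X_ne_zero i
  have h2 : (2 : K n) ≠ 0 := two_ne_zero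
  set z : Fin (2 * n) → K n := fun i => if h : (i : ℕ) < n then X ⟨i, h⟩
      else (X ⟨(i : ℕ) - n, by have := i.isLt; omega⟩)⁻¹ with hzdef
  set μ : Fin (2 * n) → ℤ := fun j => if (j : ℕ) < n then (2 * m + 1 : ℤ) else 0 with hμdef
  have hn2 : n + n = 2 * n := by omega
  set e : Fin n ⊕ Fin n ≃ Fin (2 * n) := finSumFinEquiv.trans (finCongr hn2) with hedef
  have he1 : ∀ i : Fin n, ((e (Sum.inl i) : Fin (2 * n)) : ℕ) = (i : ℕ) := by
    intro i; simp [hedef]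
  have he2 : ∀ i : Fin n, ((e (Sum.inr i) : Fin (2 * n)) : ℕ) = n + (i : ℕ) := by
    intro i; simp [hedef]; omega
  have hz1 : ∀ i : Fin n, z (e (Sum.inl i)) = X i := by
    intro i
    simp only [hzdef, he1]
    rw [dif_pos i.isLt]
  have hz2 : ∀ i : Fin n, z (e (Sum.inr i)) = (X i)⁻¹ := by
    intro i
    simp only [hzdef, he2]
    rw [dif_neg (by omega)]
    simp [Nat.add_sub_cancel_left]
  -- determinant part
  have hdet : (Matrix.of fun i j : Fin (2 * n) => z i ^ (μ j + (2 * n : ℕ) - 1 - (j : ℕ))).det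
      = (-1 : K n) ^ (n.choose 2) * ((matP m n X).det * (matQ m n X).det) := by
    rw [← Matrix.det_submatrix_equiv_self e]
    rw [← det_key m n X h2 hx]
    congr 1
    ext p q
    rcases p with i | i <;> rcases q with j | j <;>
      simp only [Matrix.submatrix_apply, Matrix.of_apply, Sum.elim_inl, Sum.elim_inr,
        hz1, hz2, hμdef, he1, he2] <;>
      [rw [if_pos j.isLt]; rw [if_neg (by omega)]; rw [if_pos j.isLt]; rw [if_neg (by omega)]] <;>
      congr 1 <;> (have hj := j.isLt; push_cast; omega)
  -- denominator part
  have hden : (∏ i : Fin (2 * n), ∏ j : Fin (2 * n), if i < j then z i - z j else 1)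
      = (-1 : K n) ^ (n.choose 2) *
          ((∏ i : Fin n, (X i - (X i)⁻¹)) * (xpairs X * xpairs X)) := by
    rw [← denom_key X hx]
    rw [← Equiv.prod_comp e (fun i => ∏ j : Fin (2 * n), if i < j then z i - z j else 1)]
    have inner : ∀ p : Fin n ⊕ Fin n,
        (∏ j : Fin (2 * n), if e p < j then z (e p) - z j else 1)
        = ∏ q : Fin n ⊕ Fin n, if e p < e q then z (e p) - z (e q) else 1 := by
      intro p
      rw [← Equiv.prod_comp e (fun j => if e p < j then z (e p) - z j else 1)]
    simp_rw [inner]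
    rw [Fintype.prod_sum_type]
    have hlt11 : ∀ i j : Fin n, (e (Sum.inl i) < e (Sum.inl j)) ↔ i < j := by
      intro i j; rw [Fin.lt_def, Fin.lt_def, he1, he1]
    have hlt12 : ∀ i j : Fin n, (e (Sum.inl i) < e (Sum.inr j)) := by
      intro i j; rw [Fin.lt_def, he1, he2]; omega
    have hlt21 : ∀ i j : Fin n, ¬ (e (Sum.inr i) < e (Sum.inl j)) := by
      intro i j; rw [Fin.lt_def, he1, he2]; have := j.isLt; omega
    have hlt22 : ∀ i j : Fin n, (e (Sum.inr i) < e (Sum.inr j)) ↔ i < j := by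
      intro i j; rw [Fin.lt_def, Fin.lt_def, he2, he2]; omega
    have hL : ∀ i : Fin n,
        (∏ q : Fin n ⊕ Fin n, if e (Sum.inl i) < e q then z (e (Sum.inl i)) - z (e q) else 1)
        = (∏ j : Fin n, if i < j then X i - X j else 1) * ∏ j : Fin n, (X i - (X j)⁻¹) := by
      intro i
      rw [Fintype.prod_sum_type]
      congr 1
      · refine Finset.prod_congr rfl fun j _ => ?_
        rw [hz1, hz1]
        by_cases h : i < j
        · rw [if_pos ((hlt11 i j).mpr h), if_pos h]
        · rw [if_neg (fun hc => h ((hlt11 i j).mp hc)), if_neg h]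
      · refine Finset.prod_congr rfl fun j _ => ?_
        rw [if_pos (hlt12 i j), hz1, hz2]
    have hR : ∀ i : Fin n,
        (∏ q : Fin n ⊕ Fin n, if e (Sum.inr i) < e q then z (e (Sum.inr i)) - z (e q) else 1)
        = ∏ j : Fin n, if i < j then (X i)⁻¹ - (X j)⁻¹ else 1 := by
      intro i
      rw [Fintype.prod_sum_type]
      rw [Finset.prod_eq_one fun j _ => if_neg (hlt21 i j), one_mul]
      refine Finset.prod_congr rfl fun j _ => ?_
      rw [hz2, hz2]
      by_cases h : i < j
      · rw [if_pos ((hlt22 i j).mpr h), if_pos h]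
      · rw [if_neg (fun hc => h ((hlt22 i j).mp hc)), if_neg h]
    simp_rw [hL, hR]
    rw [Finset.prod_mul_distrib]
    ring
  -- assemble
  unfold schur spC oeC
  rw [hdet, hden]
  have hoeP : (Matrix.of fun i j : Fin n =>
      X i ^ (((m : ℤ) + 1) + n - 1 - (j : ℕ)) + X i ^ (-(((m : ℤ) + 1) + n - 1 - (j : ℕ))))
      = matP m n X := by
    have hexp : ∀ j : Fin n, ((m : ℤ) + 1) + n - 1 - (j : ℕ) = (m : ℤ) + n - (j : ℕ) := by
      intro j; ring
    ext i j
    simp only [Matrix.of_apply, matP, hexp]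
  have hspQ : (Matrix.of fun i j : Fin n =>
      X i ^ ((m : ℤ) + n - (j : ℕ)) - X i ^ (-((m : ℤ) + n - (j : ℕ))))
      = matQ m n X := rfl
  rw [hoeP, hspQ]
  have hfac : (if h : 0 < n then
      (if (fun _ : Fin n => (m : ℤ) + 1) ⟨n - 1, by omega⟩ = 0 then (2 : K n) else 1) else 1)
      = 1 := by
    split
    · rw [if_neg (by simp; omega)]
    · rfl
  rw [hfac, one_mul]
  rw [mul_div_mul_left _ _ (pow_ne_zero _ (neg_ne_zero.mpr one_ne_zero) : ((-1 : K n) ^ (n.choose 2)) ≠ 0)]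
  rw [div_mul_div_comm]
  ring
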